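/- For s a finite sequence of naturals, let f_s : A_s → B_s be the map on ω^ω defined by f_s(α)(p) = N(α↾(p+1)) if p = N(s↾i) for some 1 ≤ i ≤ |s|, and f_s(α)(p) = α(p) otherwise, with domain A_s = {α : α(N(s↾i)) = 1 for all 1 ≤ i ≤ |s|}. Then for distinct finite sequences s ≠ t, the graphs Gr(f_s) and Gr(f_t) are disjoint. -/

import Mathlib

/-!
The exponent of the `k`-th prime in `N(s)` is `s k + 1` for `k < |s|` and `0` otherwise, so `N` is
injective on all sequences (including `N(∅) = 0`) and never takes the value `1`.

Let `P_s` be the set of codes `N(s↾i)`, `1 ≤ i ≤ |s|`, of the nonempty prefixes of `s`. If `α ∈ A_s`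
and `f_s(α) = f_t(α)`, then every `p ∈ P_s` lies in `P_t`: otherwise `f_t(α)(p) = α(p) = 1`, while
`f_s(α)(p)` is a code, hence `≠ 1`. By symmetry `P_s = P_t`. Since `N(s) ∈ P_s` and `N` is injective,
`s` is a prefix of `t`, and vice versa, so `s = t`.
-/

noncomputable def Nmap (s : List ℕ) : ℕ :=
  if s = [] then 0
  else ∏ i ∈ Finset.range s.length, (Nat.nth Nat.Prime i) ^ (s.getD i 0 + 1)

open Classical in
/-- `f_s (α) (p) = N(α↾(p+1))` if `p = N(s↾i)` for some `1 ≤ i ≤ |s|`, and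
`f_s (α) (p) = α p` otherwise. -/
noncomputable def fS (s : List ℕ) (α : ℕ → ℕ) : ℕ → ℕ := fun p =>
  if ∃ i, 1 ≤ i ∧ i ≤ s.length ∧ p = Nmap (s.take i) then
    Nmap (List.ofFn (fun j : Fin (p + 1) => α j))
  else α p

/-- The domain of `f_s`: `α (N(s↾i)) = 1` for all `1 ≤ i ≤ |s|`. -/
def AS (s : List ℕ) : Set (ℕ → ℕ) :=
  {α | ∀ i, 1 ≤ i → i ≤ s.length → α (Nmap (s.take i)) = 1}

theorem Nmap_factorization_nth_prime (s : List ℕ) (k : ℕ) :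
    (Nmap s).factorization (Nat.nth Nat.Prime k) = if k < s.length then s.getD k 0 + 1 else 0 := by
  classical
  by_cases hs : s = []
  · simp [Nmap, hs]
  rw [Nmap, if_neg hs,
    Nat.factorization_prod fun i _ => pow_ne_zero _ (Nat.prime_nth_prime i).ne_zero,
    Finsupp.finsetSum_apply]
  simp only [(Nat.prime_nth_prime _).factorization_pow, Finsupp.single_apply,
    (Nat.nth_injective Nat.infinite_setOfPred_prime).eq_iff, Finset.sum_ite_eq', Finset.mem_range]

theorem Nmap_injective : Function.Injective Nmap := by
  intro s t h
  have hexp (k : ℕ) : (if k < s.length then s.getD k 0 + 1 else 0) =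
      if k < t.length then t.getD k 0 + 1 else 0 := by
    rw [← Nmap_factorization_nth_prime, ← Nmap_factorization_nth_prime, h]
  have hlen : s.length = t.length := by
    by_contra hne
    rcases Nat.lt_or_gt_of_ne hne with hlt | hlt
    · simpa [hlt] using hexp s.length
    · simpa [hlt] using hexp t.length
  refine List.ext_getElem hlen fun k hks hkt => ?_
  simpa [hks, hkt, List.getD_eq_getElem _ _ hks, List.getD_eq_getElem _ _ hkt] using hexp k

theorem Nmap_ne_one (s : List ℕ) : Nmap s ≠ 1 := by
  intro h
  have hexp := Nmap_factorization_nth_prime s 0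
  rw [h, Nat.factorization_one, Finsupp.coe_zero, Pi.zero_apply] at hexp
  have hs : s = [] := by simpa using hexp
  simp [hs, Nmap] at h

def prefixCodes (s : List ℕ) : Set ℕ :=
  {p | ∃ i, 1 ≤ i ∧ i ≤ s.length ∧ p = Nmap (s.take i)}

theorem prefix_of_prefixCodes_subset {s t : List ℕ} (h : prefixCodes s ⊆ prefixCodes t) :
    s <+: t := by
  by_cases hs : s = []
  · exact hs ▸ List.nil_prefix
  obtain ⟨i, -, -, hi⟩ : Nmap s ∈ prefixCodes t :=
    h ⟨s.length, List.length_pos_iff.mpr hs, le_rfl, by rw [List.take_length]⟩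
  exact Nmap_injective hi ▸ List.take_prefix i t

theorem prefixCodes_subset_of_fS_eq {s t : List ℕ} {α : ℕ → ℕ} (hα : α ∈ AS s)
    (h : fS s α = fS t α) : prefixCodes s ⊆ prefixCodes t := by
  intro p hp
  by_contra hpt
  simp only [prefixCodes, Set.mem_ofPred_eq] at hp hpt
  have hp' := congrFun h p
  simp only [fS] at hp'
  rw [if_pos hp, if_neg hpt] at hp'
  obtain ⟨i, hi1, hi2, rfl⟩ := hp
  exact Nmap_ne_one _ (hp'.trans (hα i hi1 hi2))

/-- For distinct finite sequences `s ≠ t`, the graphs of `f_s` and `f_t`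
(taken on their domains) are disjoint. -/
theorem stmt_18 (s t : List ℕ) (hst : s ≠ t) :
    Disjoint {p : (ℕ → ℕ) × (ℕ → ℕ) | p.1 ∈ AS s ∧ p.2 = fS s p.1}
      {p : (ℕ → ℕ) × (ℕ → ℕ) | p.1 ∈ AS t ∧ p.2 = fS t p.1} := by
  rw [Set.disjoint_left]
  rintro ⟨α, β⟩ ⟨hs, hβ⟩ ⟨ht, hf⟩
  rw [hβ] at hf
  have hst_pre := prefix_of_prefixCodes_subset (prefixCodes_subset_of_fS_eq hs hf)
  have hts_pre := prefix_of_prefixCodes_subset (prefixCodes_subset_of_fS_eq ht hf.symm)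
  exact hst (hst_pre.eq_of_length (hst_pre.length_le.antisymm hts_pre.length_le))
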